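/- arXiv:2110.08260 — 6 statements merged into one kernel-verified Lean document; each statement's English description precedes it below -/
import Mathlib

section
/- Let Ẑ = {Aν + diag(b)η + a : ν,η ∈ [-1,1]^p} with A ∈ ℝ^{p×p} invertible and b ≥ 0, and let Ẑ' = {A'ν' + diag(b')η' + a' : ν' ∈ [-1,1]^k, η' ∈ [-1,1]^p} with b' ≥ 0. If |A⁻¹A'|·1 + |A⁻¹·diag(max(0, |a'-a| + b' - b))|·1 ≤ 1 holds elementwise, then Ẑ' ⊆ Ẑ. -/
lemma chz_decomp (b d e : ℝ) (hb : 0 ≤ b) (hd : 0 ≤ d) (he : |e| ≤ b + d) :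
    ∃ η t : ℝ, |η| ≤ 1 ∧ |t| ≤ 1 ∧ b * η + d * t = e := by
  set c := max (-b) (min b e) with hc
  have h1 := abs_le.mp he
  have hcb : |c| ≤ b := by
    rw [abs_le]
    exact ⟨le_max_left _ _, max_le (by linarith) (min_le_left _ _)⟩
  have hr : |e - c| ≤ d := by
    rcases le_total e (-b) with h | h
    · have hcv : c = -b := by
        have hm : min b e ≤ -b := le_trans (min_le_right _ _) h
        rw [hc, max_eq_left hm]
      rw [hcv, abs_le]; constructor <;> linarith
    · rcases le_total b e with h2 | h2
      · have hcv : c = b := by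
          rw [hc, min_eq_left h2, max_eq_right (by linarith)]
        rw [hcv, abs_le]; constructor <;> linarith
      · have hcv : c = e := by
          rw [hc, min_eq_right h2, max_eq_right h]
        simp [hcv, hd]
  refine ⟨if b = 0 then 0 else c / b, if d = 0 then 0 else (e - c) / d, ?_, ?_, ?_⟩
  · split_ifs with h
    · simp
    · rw [abs_div, abs_of_nonneg hb, div_le_one (lt_of_le_of_ne hb (Ne.symm h))]
      exact hcb
  · split_ifs with h
    · simp
    · rw [abs_div, abs_of_nonneg hd, div_le_one (lt_of_le_of_ne hd (Ne.symm h))]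
      exact hr
  · split_ifs with h h2 h3
    · have hc0 : c = 0 := by
        have := hcb; rw [h] at this
        exact abs_eq_zero.mp (le_antisymm this (abs_nonneg _))
      have : e = 0 := by
        have := hr; rw [h2, hc0, sub_zero] at this
        exact abs_eq_zero.mp (le_antisymm this (abs_nonneg _))
      simp [this]
    · have hc0 : c = 0 := by
        have := hcb; rw [h] at this
        exact abs_eq_zero.mp (le_antisymm this (abs_nonneg _))
      field_simp [hc0]
      rw [hc0]; ring
    · have : e - c = 0 := by
        have := hr; rw [h3] at this
        exact abs_eq_zero.mp (le_antisymm this (abs_nonneg _))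
      have hec : e = c := by linarith
      field_simp [hec]
      rw [hec]; ring
    · field_simp
      ring

/-- CH-Zonotope containment: if
`|A⁻¹A'|·1 + |A⁻¹·diag(max(0, |a'-a| + b' - b))|·1 ≤ 1` elementwise, then the
improper CH-Zonotope `Ẑ'` is contained in the proper CH-Zonotope `Ẑ`. -/
theorem chzonotope_containment {p k : ℕ}
    (A : Matrix (Fin p) (Fin p) ℝ) (hA : IsUnit A)
    (b : Fin p → ℝ) (hb : ∀ i, 0 ≤ b i) (a : Fin p → ℝ)
    (A' : Matrix (Fin p) (Fin k) ℝ)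
    (b' : Fin p → ℝ) (hb' : ∀ i, 0 ≤ b' i) (a' : Fin p → ℝ)
    (d : Fin p → ℝ) (hd : ∀ i, d i = max 0 (|a' i - a i| + b' i - b i))
    (hcond : ∀ i, (∑ j, |(A⁻¹ * A') i j|) +
        (∑ j, |(A⁻¹ * Matrix.diagonal d) i j|) ≤ 1) :
    {x : Fin p → ℝ | ∃ (ν' : Fin k → ℝ) (η' : Fin p → ℝ),
        (∀ j, ν' j ∈ Set.Icc (-1 : ℝ) 1) ∧ (∀ i, η' i ∈ Set.Icc (-1 : ℝ) 1) ∧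
        x = A'.mulVec ν' + (fun i => b' i * η' i) + a'} ⊆
    {x : Fin p → ℝ | ∃ (ν : Fin p → ℝ) (η : Fin p → ℝ),
        (∀ j, ν j ∈ Set.Icc (-1 : ℝ) 1) ∧ (∀ i, η i ∈ Set.Icc (-1 : ℝ) 1) ∧
        x = A.mulVec ν + (fun i => b i * η i) + a} := by
  have hAdet : IsUnit A.det := (Matrix.isUnit_iff_isUnit_det A).mp hA
  have hAinv : A * A⁻¹ = 1 := Matrix.mul_nonsing_inv A hAdet
  intro x hx
  obtain ⟨ν', η', hν', hη', hxeq⟩ := hx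
  set e : Fin p → ℝ := fun i => b' i * η' i + (a' i - a i) with he
  have hde : ∀ i, 0 ≤ d i := fun i => by rw [hd i]; exact le_max_left _ _
  have hebd : ∀ i, |e i| ≤ b i + d i := by
    intro i
    have h1 : |η' i| ≤ 1 := abs_le.mpr ⟨(hη' i).1, (hη' i).2⟩
    have h2 : |b' i * η' i| ≤ b' i := by
      rw [abs_mul, abs_of_nonneg (hb' i)]
      calc b' i * |η' i| ≤ b' i * 1 := by
            exact mul_le_mul_of_nonneg_left h1 (hb' i)
        _ = b' i := mul_one _
    have h3 : d i ≥ |a' i - a i| + b' i - b i := by rw [hd i]; exact le_max_right _ _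
    calc |e i| ≤ |b' i * η' i| + |a' i - a i| := abs_add_le _ _
      _ ≤ b' i + |a' i - a i| := by linarith
      _ ≤ b i + d i := by linarith
  choose η t hη ht heq using fun i => chz_decomp (b i) (d i) (e i) (hb i) (hde i) (hebd i)
  set ν : Fin p → ℝ :=
    (A⁻¹ * A').mulVec ν' + (A⁻¹ * Matrix.diagonal d).mulVec t with hν
  refine ⟨ν, η, ?_, ?_, ?_⟩
  · intro i
    rw [Set.mem_Icc, ← abs_le]
    have h1 : |((A⁻¹ * A').mulVec ν') i| ≤ ∑ j, |(A⁻¹ * A') i j| := by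
      calc |((A⁻¹ * A').mulVec ν') i| = |∑ j, (A⁻¹ * A') i j * ν' j| := rfl
        _ ≤ ∑ j, |(A⁻¹ * A') i j * ν' j| := Finset.abs_sum_le_sum_abs _ _
        _ ≤ ∑ j, |(A⁻¹ * A') i j| := by
            apply Finset.sum_le_sum
            intro j _
            rw [abs_mul]
            calc |(A⁻¹ * A') i j| * |ν' j| ≤ |(A⁻¹ * A') i j| * 1 :=
                  mul_le_mul_of_nonneg_left (abs_le.mpr ⟨(hν' j).1, (hν' j).2⟩) (abs_nonneg _)
              _ = _ := mul_one _
    have h2 : |((A⁻¹ * Matrix.diagonal d).mulVec t) i| ≤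
        ∑ j, |(A⁻¹ * Matrix.diagonal d) i j| := by
      calc |((A⁻¹ * Matrix.diagonal d).mulVec t) i|
          = |∑ j, (A⁻¹ * Matrix.diagonal d) i j * t j| := rfl
        _ ≤ ∑ j, |(A⁻¹ * Matrix.diagonal d) i j * t j| := Finset.abs_sum_le_sum_abs _ _
        _ ≤ ∑ j, |(A⁻¹ * Matrix.diagonal d) i j| := by
            apply Finset.sum_le_sum
            intro j _
            rw [abs_mul]
            calc |(A⁻¹ * Matrix.diagonal d) i j| * |t j|
                ≤ |(A⁻¹ * Matrix.diagonal d) i j| * 1 :=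
                  mul_le_mul_of_nonneg_left (ht j) (abs_nonneg _)
              _ = _ := mul_one _
    calc |ν i| ≤ |((A⁻¹ * A').mulVec ν') i| + |((A⁻¹ * Matrix.diagonal d).mulVec t) i| := by
          rw [hν]; exact abs_add_le _ _
      _ ≤ (∑ j, |(A⁻¹ * A') i j|) + ∑ j, |(A⁻¹ * Matrix.diagonal d) i j| := by
          gcongr
      _ ≤ 1 := hcond i
  · intro i
    rw [Set.mem_Icc, ← abs_le]
    exact hη i
  · have hAν : A.mulVec ν = A'.mulVec ν' + (Matrix.diagonal d).mulVec t := by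
      rw [hν, Matrix.mulVec_add, Matrix.mulVec_mulVec, Matrix.mulVec_mulVec,
        ← Matrix.mul_assoc, ← Matrix.mul_assoc, hAinv, Matrix.one_mul, Matrix.one_mul]
    rw [hxeq, hAν]
    funext i
    have hdt : ((Matrix.diagonal d).mulVec t) i = d i * t i := Matrix.mulVec_diagonal d t i
    have := heq i
    simp only [Pi.add_apply, hdt, he] at *
    linarith
end

section
/- Let g : ℝ^q × ℝ^p → ℝ^p be a fixpoint solver such that for each bounded input x the sequence s_{n+1} = g(x, s_n) converges to a unique fixpoint s*(x). Let g# be a sound abstract transformer: for all x ∈ X and s ∈ S, g(x,s) ∈ γ(g#(X̂, Ŝ)) whenever x ∈ γ(X̂), s ∈ γ(Ŝ). If γ(Ŝ_{n+1}) is closed and γ(Ŝ_{n+1}) ⊆ γ(Ŝ_n) where Ŝ_{n+1} = g#(X̂, Ŝ_n), then for every x ∈ γ(X̂) the true fixpoint s*(x) lies in γ(Ŝ_{n+1}). -/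
open Filter Topology

/-- Fixpoint contraction: if a sound abstract transformer `gs` of a fixpoint
solver `g` (converging to a unique fixpoint `sStar x` from any start)
produces `Ŝ_{n+1} = gs(X̂, Ŝ_n)` with closed concretization contained in
`γ(Ŝ_n)`, then for every `x ∈ γ(X̂)` the true fixpoint `sStar x` lies in
`γ(Ŝ_{n+1})`. -/
theorem fixpoint_contraction {q p : ℕ} {AbsX Abs : Type*}
    (g : EuclideanSpace ℝ (Fin q) → EuclideanSpace ℝ (Fin p) → EuclideanSpace ℝ (Fin p))
    (sStar : EuclideanSpace ℝ (Fin q) → EuclideanSpace ℝ (Fin p))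
    (hconv : ∀ x s₀, Tendsto (fun n => (g x)^[n] s₀) atTop (𝓝 (sStar x)))
    (γX : AbsX → Set (EuclideanSpace ℝ (Fin q)))
    (γ : Abs → Set (EuclideanSpace ℝ (Fin p)))
    (gs : AbsX → Abs → Abs)
    (hsound : ∀ (Xh : AbsX) (Sh : Abs) x s, x ∈ γX Xh → s ∈ γ Sh →
        g x s ∈ γ (gs Xh Sh))
    (Xh : AbsX) (Sn : Abs)
    (hne : ∀ x ∈ γX Xh, ∃ s, s ∈ γ Sn)
    (hclosed : IsClosed (γ (gs Xh Sn)))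
    (hsub : γ (gs Xh Sn) ⊆ γ Sn) :
    ∀ x ∈ γX Xh, sStar x ∈ γ (gs Xh Sn) := by
  intro x hx
  obtain ⟨s₀, hs₀⟩ := hne x hx
  have key : ∀ n, (g x)^[n+1] s₀ ∈ γ (gs Xh Sn) := by
    intro n
    induction n with
    | zero => simpa using hsound Xh Sn x s₀ hx hs₀
    | succ k ih =>
        rw [Function.iterate_succ_apply']
        exact hsound Xh Sn x _ hx (hsub ih)
  have hlim : Tendsto (fun n => (g x)^[n+1] s₀) atTop (𝓝 (sStar x)) :=
    (hconv x s₀).comp (tendsto_add_atTop_nat 1)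
  exact hclosed.mem_of_tendsto hlim (Filter.Eventually.of_forall key)
end

section
/- Let g be an iterative solver converging to a unique fixpoint in finitely many steps for each bounded input, and g# a sound abstract transformer of g. Fix s ≥ 1 and define Ŝ_{n+1} = g#(X̂, Ŝ_n). If γ(Ŝ_{n+s}) is closed and γ(Ŝ_{n+s}) ⊆ γ(Ŝ_n), then the set of true fixpoints {z*(x) : x ∈ γ(X̂)} is contained in γ(Ŝ_{n+s}). -/
open Filter Topology

/-- s-step fixpoint contraction: if `Ŝ_{n+1} = g#(X̂, Ŝ_n)` and, for some
`s ≥ 1`, `γ(Ŝ_{n+s})` is closed and contained in `γ(Ŝ_n)`, then the set of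
true fixpoints `{z*(x) : x ∈ γ(X̂)}` is contained in `γ(Ŝ_{n+s})`. -/
theorem s_step_fixpoint_contraction {q p : ℕ} {AbsX Abs : Type*}
    (g : EuclideanSpace ℝ (Fin q) → EuclideanSpace ℝ (Fin p) → EuclideanSpace ℝ (Fin p))
    (zStar : EuclideanSpace ℝ (Fin q) → EuclideanSpace ℝ (Fin p))
    (hconv : ∀ x s₀, Tendsto (fun n => (g x)^[n] s₀) atTop (𝓝 (zStar x)))
    (γX : AbsX → Set (EuclideanSpace ℝ (Fin q)))
    (γ : Abs → Set (EuclideanSpace ℝ (Fin p)))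
    (gs : AbsX → Abs → Abs)
    (hsound : ∀ (Xh : AbsX) (Sh : Abs) x z, x ∈ γX Xh → z ∈ γ Sh →
        g x z ∈ γ (gs Xh Sh))
    (Xh : AbsX) (Shat : ℕ → Abs)
    (hstep : ∀ m : ℕ, Shat (m + 1) = gs Xh (Shat m))
    (n s : ℕ) (hs : 1 ≤ s)
    (hne : ∀ x ∈ γX Xh, ∃ z, z ∈ γ (Shat n))
    (hclosed : IsClosed (γ (Shat (n + s))))
    (hsub : γ (Shat (n + s)) ⊆ γ (Shat n)) :
    {z : EuclideanSpace ℝ (Fin p) | ∃ x ∈ γX Xh, z = zStar x} ⊆ γ (Shat (n + s)) := by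
  rintro z ⟨x, hx, rfl⟩
  obtain ⟨z₀, hz₀⟩ := hne x hx
  -- iterating j steps from γ(Shat m) lands in γ(Shat (m+j))
  have key : ∀ j m (z : EuclideanSpace ℝ (Fin p)), z ∈ γ (Shat m) →
      (g x)^[j] z ∈ γ (Shat (m + j)) := by
    intro j
    induction j with
    | zero => intro m z hz; simpa using hz
    | succ j ih =>
      intro m z hz
      have := ih (m + 1) (g x z) (by rw [hstep]; exact hsound Xh (Shat m) x z hx hz)
      rw [Function.iterate_succ_apply, show m + (j + 1) = m + 1 + j by omega]
      exact this
  have mem : ∀ k : ℕ, (g x)^[(k + 1) * s] z₀ ∈ γ (Shat (n + s)) := by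
    intro k
    induction k with
    | zero => simpa using key s n z₀ hz₀
    | succ k ih =>
      have := key s n _ (hsub ih)
      have e : (k + 1 + 1) * s = s + (k + 1) * s := by ring
      rw [e, Function.iterate_add_apply]
      exact this
  have htend : Tendsto (fun k => (g x)^[(k + 1) * s] z₀) atTop (𝓝 (zStar x)) := by
    refine (hconv x z₀).comp ?_
    exact tendsto_atTop_mono (fun k => Nat.le_trans (Nat.le_succ k) (le_mul_of_one_le_right (Nat.zero_le _) hs)) tendsto_id
  exact hclosed.mem_of_tendsto htend (Filter.Eventually.of_forall mem)
end

section
/- Let l < 0 < u and λ ∈ [0, u/(u-l)], and set μ = (1-λ)u/2. Then for all x ∈ [l, u], λx + μ - μ ≤ ReLU(x) ≤ λx + μ + μ, i.e., |ReLU(x) - λx - μ| ≤ μ. -/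
/-- Soundness of the parametrized ReLU transformer, case `0 ≤ λ ≤ u/(u-l)`:
with `μ = (1-λ)u/2`, for all `x ∈ [l,u]`, `|ReLU(x) - λx - μ| ≤ μ`. -/
theorem relu_transformer_sound_low (l u lam μ : ℝ)
    (hl : l < 0) (hu : 0 < u)
    (hlam₀ : 0 ≤ lam) (hlam₁ : lam ≤ u / (u - l))
    (hμ : μ = (1 - lam) * u / 2) :
    ∀ x ∈ Set.Icc l u, |max x 0 - (lam * x + μ)| ≤ μ := by
  intro x hx
  obtain ⟨hxl, hxu⟩ := hx
  have hul : (0:ℝ) < u - l := by linarith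
  have hkey : lam * (u - l) ≤ u := (le_div_iff₀ hul).mp hlam₁
  have hlam1 : lam ≤ 1 := by nlinarith
  rcases le_total x 0 with h | h
  · rw [max_eq_right h, abs_le]
    constructor <;> nlinarith
  · rw [max_eq_left h, abs_le]
    constructor <;> nlinarith
end

section
/- Let l < 0 < u and λ ∈ [u/(u-l), 1], and set μ = -λl/2. Then for all x ∈ [l, u], |ReLU(x) - λx - μ| ≤ μ. -/
/-- Soundness of the parametrized ReLU transformer, case `u/(u-l) ≤ λ ≤ 1`:
with `μ = -λl/2`, for all `x ∈ [l,u]`, `|ReLU(x) - λx - μ| ≤ μ`. -/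
theorem relu_transformer_sound_high (l u lam μ : ℝ)
    (hl : l < 0) (hu : 0 < u)
    (hlam₀ : u / (u - l) ≤ lam) (hlam₁ : lam ≤ 1)
    (hμ : μ = -lam * l / 2) :
    ∀ x ∈ Set.Icc l u, |max x 0 - (lam * x + μ)| ≤ μ := by
  intro x ⟨hxl, hxu⟩
  have hul : 0 < u - l := by linarith
  have hlam_pos : 0 ≤ lam := le_trans (by positivity) hlam₀
  have hkey : u ≤ lam * (u - l) := (div_le_iff₀ hul).mp hlam₀
  rw [abs_le]
  rcases le_or_gt x 0 with hx | hx
  · rw [max_eq_right hx]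
    constructor <;> nlinarith [mul_le_mul_of_nonneg_left hxl hlam_pos]
  · rw [max_eq_left hx.le]
    constructor <;> nlinarith [mul_le_mul_of_nonneg_right hlam₁ hx.le,
      mul_le_mul_of_nonneg_left hxu (sub_nonneg.mpr hlam₁)]
end

section
/- Let m > 0, W = (1-m)I - PᵀP + Q - Qᵀ, and 0 < α < 2m/‖I - W‖₂². Then for any x, the Forward-Backward iteration z_{n+1} = ReLU((1-α)z_n + α(Wz_n + Ux + b)) converges to a unique fixpoint z*(x), and z*(x) = ReLU(Wz*(x) + Ux + b). -/
open Filter Topology Matrix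

open scoped RealInnerProductSpace

/-- Scalar fact: a fixpoint of the damped ReLU step is a fixpoint of the ReLU step. -/
lemma relu_fb_fix_fwd {α s w : ℝ} (hα : 0 < α)
    (h : s = max ((1 - α) * s + α * w) 0) : s = max w 0 := by
  have hs : 0 ≤ s := h ▸ le_max_right _ _
  rcases hs.eq_or_lt with h0 | h0
  · -- s = 0
    have h1 : (1 - α) * s + α * w ≤ 0 := by
      by_contra hc
      push_neg at hc
      rw [max_eq_left hc.le] at h
      nlinarith
    have hw : w ≤ 0 := by nlinarith
    rw [max_eq_right hw, ← h0]
  · -- 0 < s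
    have h1 : s = (1 - α) * s + α * w := by
      rcases max_cases ((1 - α) * s + α * w) 0 with ⟨h1, _⟩ | ⟨h1, h2⟩
      · rw [h1] at h; exact h
      · rw [h1] at h; linarith
    have hw : s = w := by nlinarith
    rw [← hw, max_eq_left hs]

/-- Scalar fact: a fixpoint of the ReLU step is a fixpoint of the damped ReLU step. -/
lemma relu_fb_fix_bwd {α s w : ℝ} (hα : 0 < α)
    (h : s = max w 0) : s = max ((1 - α) * s + α * w) 0 := by
  rcases le_or_gt w 0 with hw | hw
  · have hs : s = 0 := by rw [h, max_eq_right hw]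
    subst hs
    rw [max_eq_right] <;> nlinarith
  · have hs : s = w := by rw [h, max_eq_left hw.le]
    subst hs
    rw [max_eq_left] <;> nlinarith

/-- Convergence of Forward-Backward splitting for monDEQs: with
`W = (1-m)I - PᵀP + Q - Qᵀ`, `m > 0`, and `0 < α < 2m/‖I-W‖₂²`, the iteration
`z_{n+1} = ReLU((1-α)z_n + α(Wz_n + Ux + b))` converges from every start to a
unique limit `z*(x)` satisfying `z*(x) = ReLU(Wz*(x) + Ux + b)`. -/
theorem fb_splitting_converges {p q : ℕ} (m α : ℝ) (hm : 0 < m)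
    (P Q W : Matrix (Fin p) (Fin p) ℝ)
    (hW : W = (1 - m) • (1 : Matrix (Fin p) (Fin p) ℝ) - Pᵀ * P + Q - Qᵀ)
    (hα₀ : 0 < α)
    (hα₁ : α < 2 * m / ‖Matrix.toEuclideanCLM (𝕜 := ℝ) (n := Fin p) (1 - W)‖ ^ 2)
    (U : Matrix (Fin p) (Fin q) ℝ) (b : Fin p → ℝ) (x : Fin q → ℝ) :
    ∃ zStar : Fin p → ℝ,
      (∀ z₀ : Fin p → ℝ,
        Tendsto (fun n => (fun z : Fin p → ℝ => fun i =>
            max ((1 - α) * z i + α * ((W.mulVec z + U.mulVec x + b) i)) 0)^[n] z₀)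
          atTop (𝓝 zStar)) ∧
      zStar = (fun i => max ((W.mulVec zStar + U.mulVec x + b) i) 0) ∧
      ∀ z' : Fin p → ℝ,
        z' = (fun i => max ((W.mulVec z' + U.mulVec x + b) i) 0) → z' = zStar := by
  set F : (Fin p → ℝ) → (Fin p → ℝ) := fun z : Fin p → ℝ => fun i =>
      max ((1 - α) * z i + α * ((W.mulVec z + U.mulVec x + b) i)) 0 with hF
  set B := Matrix.toEuclideanCLM (𝕜 := ℝ) (n := Fin p) (1 - W) with hB
  set e := WithLp.equiv 2 (Fin p → ℝ) with he
  set T : EuclideanSpace ℝ (Fin p) → EuclideanSpace ℝ (Fin p) :=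
      fun z => e.symm (F (e z)) with hT
  -- ‖B‖ is positive
  have hBpos : 0 < ‖B‖ := by
    rcases (norm_nonneg B).eq_or_lt with h0 | h0
    · rw [← h0] at hα₁; norm_num at hα₁; linarith
    · exact h0
  have hαB : α * ‖B‖ ^ 2 < 2 * m := by
    rw [lt_div_iff₀ (by positivity)] at hα₁; linarith
  -- B acts as mulVec by 1 - W
  have hBapp : ∀ v : EuclideanSpace ℝ (Fin p),
      B v = e.symm ((1 - W).mulVec (e v)) := by
    intro v
    conv_lhs => rw [← e.symm_apply_apply v]
    rw [hB]; rfl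
  -- strong monotonicity
  have hmono : ∀ v : EuclideanSpace ℝ (Fin p), m * ‖v‖ ^ 2 ≤ ⟪v, B v⟫ := by
    intro v
    have h1W : (1 : Matrix (Fin p) (Fin p) ℝ) - W = m • 1 + Pᵀ * P + (Qᵀ - Q) := by
      rw [hW]; module
    have hinner : ⟪v, B v⟫ = (e v) ⬝ᵥ ((1 - W).mulVec (e v)) := by
      rw [hBapp v]
      rw [PiLp.inner_apply]
      simp only [RCLike.inner_apply, conj_trivial]
      exact Finset.sum_congr rfl fun i _ => mul_comm _ _
    rw [hinner, h1W]
    rw [Matrix.add_mulVec, Matrix.add_mulVec, Matrix.sub_mulVec,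
      Matrix.smul_mulVec, Matrix.one_mulVec]
    rw [dotProduct_add, dotProduct_add, dotProduct_sub]
    have hself : (e v) ⬝ᵥ (m • e v) = m * ((e v) ⬝ᵥ (e v)) := by
      simp [dotProduct_smul, smul_eq_mul]
    have hnorm : (e v) ⬝ᵥ (e v) = ‖v‖ ^ 2 := by
      rw [← real_inner_self_eq_norm_sq v, PiLp.inner_apply]
      simp only [RCLike.inner_apply, conj_trivial]
      rfl
    have hPP : 0 ≤ (e v) ⬝ᵥ ((Pᵀ * P).mulVec (e v)) := by
      rw [← Matrix.mulVec_mulVec, Matrix.dotProduct_mulVec, Matrix.vecMul_transpose]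
      exact Finset.sum_nonneg fun i _ => mul_self_nonneg _
    have hQQ : (e v) ⬝ᵥ (Qᵀ.mulVec (e v)) - (e v) ⬝ᵥ (Q.mulVec (e v)) = 0 := by
      rw [Matrix.dotProduct_mulVec (v := e v) (A := Qᵀ), Matrix.vecMul_transpose,
        dotProduct_comm]
      ring
    rw [hself, hnorm]
    linarith
  -- the linear part L = I - α B, and the contraction estimate
  set L : EuclideanSpace ℝ (Fin p) →L[ℝ] EuclideanSpace ℝ (Fin p) :=
      1 - α • B with hL
  have hLsq : ∀ v : EuclideanSpace ℝ (Fin p),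
      ‖L v‖ ^ 2 ≤ (1 - 2 * α * m + α ^ 2 * ‖B‖ ^ 2) * ‖v‖ ^ 2 := by
    intro v
    have hLv : L v = v - α • B v := by
      rw [hL]; simp
    rw [hLv, norm_sub_sq_real, real_inner_smul_right, norm_smul, Real.norm_eq_abs,
      abs_of_pos hα₀]
    have h1 := hmono v
    have h2 := B.le_opNorm v
    have h3 : ‖B v‖ ≥ 0 := norm_nonneg _
    have h4 : ‖v‖ ≥ 0 := norm_nonneg _
    have h5 : ‖B v‖ ^ 2 ≤ (‖B‖ * ‖v‖) ^ 2 := by nlinarith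
    have h6 : α ^ 2 * ‖B v‖ ^ 2 ≤ α ^ 2 * (‖B‖ * ‖v‖) ^ 2 := by nlinarith [sq_nonneg α]
    have h7 : 2 * α * (m * ‖v‖ ^ 2) ≤ 2 * α * inner ℝ v (B v) := by nlinarith
    nlinarith
  set κ := Real.sqrt (max 0 (1 - 2 * α * m + α ^ 2 * ‖B‖ ^ 2)) with hκ
  have hκ0 : 0 ≤ κ := Real.sqrt_nonneg _
  have hκ1 : κ < 1 := by
    rw [hκ, Real.sqrt_lt' one_pos, one_pow]
    apply max_lt one_pos
    nlinarith [mul_lt_mul_of_pos_left hαB hα₀]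
  have hLip : ∀ v : EuclideanSpace ℝ (Fin p), ‖L v‖ ≤ κ * ‖v‖ := by
    intro v
    have h1 : ‖L v‖ ^ 2 ≤ (κ * ‖v‖) ^ 2 := by
      have : κ ^ 2 = max 0 (1 - 2 * α * m + α ^ 2 * ‖B‖ ^ 2) :=
        Real.sq_sqrt (le_max_left _ _)
      calc ‖L v‖ ^ 2 ≤ (1 - 2 * α * m + α ^ 2 * ‖B‖ ^ 2) * ‖v‖ ^ 2 := hLsq v
        _ ≤ max 0 (1 - 2 * α * m + α ^ 2 * ‖B‖ ^ 2) * ‖v‖ ^ 2 := by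
            apply mul_le_mul_of_nonneg_right (le_max_right _ _) (by positivity)
        _ = (κ * ‖v‖) ^ 2 := by rw [mul_pow, this]
    have h2 := Real.sqrt_le_sqrt h1
    rwa [Real.sqrt_sq (norm_nonneg _), Real.sqrt_sq (by positivity)] at h2
  -- T is a contraction with constant κ
  set k : NNReal := ⟨κ, hκ0⟩ with hk
  have hcontr : ContractingWith k T := by
    constructor
    · exact_mod_cast hκ1
    · apply LipschitzWith.of_dist_le_mul
      intro z w
      rw [dist_eq_norm, dist_eq_norm]
      have hstep : ‖T z - T w‖ ≤ ‖L (z - w)‖ := by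
        rw [EuclideanSpace.norm_eq, EuclideanSpace.norm_eq]
        apply Real.sqrt_le_sqrt
        apply Finset.sum_le_sum
        intro i _
        rw [Real.norm_eq_abs, Real.norm_eq_abs]
        apply pow_le_pow_left₀ (abs_nonneg _) ?_ 2
        have hL1 : L (z - w) = (z - w) - α • B (z - w) := by rw [hL]; simp
        rw [hL1, hBapp]
        simp only [hT, hF, he, PiLp.sub_apply, PiLp.smul_apply,
          WithLp.equiv_apply, WithLp.equiv_symm_apply, PiLp.toLp_apply, WithLp.ofLp_sub,
          Matrix.sub_mulVec, Matrix.one_mulVec, Matrix.mulVec_sub,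
          Pi.sub_apply, Pi.add_apply, smul_eq_mul]
        refine le_trans (abs_max_sub_max_le_abs _ _ _) (le_of_eq ?_)
        congr 1
        ring
      calc ‖T z - T w‖ ≤ ‖L (z - w)‖ := hstep
        _ ≤ κ * ‖z - w‖ := hLip _
        _ = (k : ℝ) * ‖z - w‖ := rfl
  -- the fixed point
  set zE := ContractingWith.fixedPoint T hcontr with hzE
  have hfixT : T zE = zE := hcontr.fixedPoint_isFixedPt
  set zStar : Fin p → ℝ := e zE with hzStar
  have hFfix : F zStar = zStar := by
    have h1 : e (T zE) = e zE := by rw [hfixT]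
    rw [hT] at h1
    simp only [Equiv.apply_symm_apply] at h1
    rw [hzStar]
    exact h1
  -- conjugation of iterates
  have hiter : ∀ (n : ℕ) (z₀ : Fin p → ℝ), T^[n] (e.symm z₀) = e.symm (F^[n] z₀) := by
    intro n
    induction n with
    | zero => intro z₀; simp
    | succ n ih =>
      intro z₀
      rw [Function.iterate_succ_apply', Function.iterate_succ_apply', ih, hT]
      simp only [Equiv.apply_symm_apply]
  refine ⟨zStar, ?_, ?_, ?_⟩
  · intro z₀
    have h1 := hcontr.tendsto_iterate_fixedPoint (e.symm z₀)
    rw [← hzE] at h1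
    have h2 : Tendsto (fun n => e.symm (F^[n] z₀)) atTop (𝓝 zE) := by
      simpa only [hiter] using h1
    have h3 : Tendsto ((WithLp.equiv 2 (Fin p → ℝ)) ∘ (fun n => e.symm (F^[n] z₀))) atTop
        (𝓝 (WithLp.equiv 2 (Fin p → ℝ) zE)) :=
      ((PiLp.continuous_ofLp 2 (fun _ : Fin p => ℝ)).tendsto zE).comp h2
    have h4 : (WithLp.equiv 2 (Fin p → ℝ)) ∘ (fun n => e.symm (F^[n] z₀))
        = fun n => F^[n] z₀ := by
      funext n
      simp only [Function.comp_apply, he, Equiv.apply_symm_apply]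
    have h5 : WithLp.equiv 2 (Fin p → ℝ) zE = zStar := by
      rw [hzStar, he]
    rw [h4, h5] at h3
    exact h3
  · funext i
    have h1 := congrFun hFfix i
    simp only [hF] at h1
    exact (relu_fb_fix_fwd hα₀ h1.symm : zStar i = max ((W.mulVec zStar + U.mulVec x + b) i) 0)
  · intro z' hz'
    have hFz' : F z' = z' := by
      funext i
      have h0 := congrFun hz' i
      simp only [hF]
      exact (relu_fb_fix_bwd hα₀ h0).symm
    have hTz' : T (e.symm z') = e.symm z' := by
      rw [hT]
      simp only [Equiv.apply_symm_apply, hFz']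
    have h1 : e.symm z' = zE := hcontr.fixedPoint_unique hTz'
    have h2 : z' = e zE := by rw [← h1]; simp only [Equiv.apply_symm_apply]
    rw [h2, hzStar]
end
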